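/- Let u solve harmonic map flow on B_R × [0,T) with stress-energy tensor uniformly bounded in L^q: sup_{τ≤t<T} ‖S(u(t))‖_{L^q} ≤ σ for some q ≥ 1. Then for τ ≤ t₁ ≤ t₂ < T, E(u(t₂), B_{R/2}) ≤ E(u(t₁), B_R) + C σ (t₂ − t₁) R^{-2/q}. -/

import Mathlib

/-!
Test the weak energy inequality against `φ_R(x) = ψ(x / R)`, where `ψ` is a fixed bump function
equal to `1` on `B_{1/2}` and supported in `B_1`. Then `φ_R = 1` on `B_{R/2}`, `φ_R` is supported in
`B_R` and `|∇²φ_R| ≤ M / R²`, so by Hölder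
`∫_{B_R} |∇²φ_R| |S| ≤ (M / R²) σ |B_R|^{1 - 1/q} ≤ π M σ R^{-2/q}`,
and integrating over `[t₁, t₂]` gives the bound with `C = π M`.
-/

open MeasureTheory Metric Set Real
open scoped ENNReal Interval

theorem norm_integral_le_of_eLpNorm_le {α E : Type*} [MeasurableSpace α] [NormedAddCommGroup E]
    [NormedSpace ℝ E] {μ : Measure α} [IsFiniteMeasure μ] {f : α → E} {p : ℝ≥0∞} (hp : 1 ≤ p)
    {c : ℝ} (hc : 0 ≤ c) (hf : eLpNorm f p μ ≤ ENNReal.ofReal c) :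
    ‖∫ x, f x ∂μ‖ ≤ c * μ.real univ ^ (1 - 1 / p.toReal) := by
  by_cases hm : AEStronglyMeasurable f μ
  swap
  · rw [integral_non_aestronglyMeasurable hm, norm_zero]
    positivity
  have hexp : 0 ≤ 1 - 1 / p.toReal := by
    rcases eq_or_ne p ∞ with rfl | hp_top
    · simp
    have : 1 ≤ p.toReal := ENNReal.toReal_one ▸ ENNReal.toReal_mono hp_top hp
    linarith [div_le_one_of_le₀ this (by positivity)]
  have hHolder : eLpNorm f 1 μ ≤ ENNReal.ofReal c * μ univ ^ (1 - 1 / p.toReal) := by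
    have := eLpNorm_le_eLpNorm_mul_rpow_measure_univ hp hm
    rw [ENNReal.toReal_one, div_one] at this
    exact this.trans (by gcongr)
  calc ‖∫ x, f x ∂μ‖ ≤ (eLpNorm f 1 μ).toReal := by
        simpa [eLpNorm_one_eq_lintegral_enorm, ofReal_norm]
          using norm_integral_le_lintegral_norm f
    _ ≤ (ENNReal.ofReal c * μ univ ^ (1 - 1 / p.toReal)).toReal :=
        ENNReal.toReal_mono
          (ENNReal.mul_ne_top ENNReal.ofReal_ne_top (ENNReal.rpow_ne_top_of_nonneg hexp
            (measure_ne_top _ _))) hHolder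
    _ = c * μ.real univ ^ (1 - 1 / p.toReal) := by
        rw [ENNReal.toReal_mul, ENNReal.toReal_ofReal hc, ← ENNReal.toReal_rpow, measureReal_def]

theorem norm_fderiv_fderiv_comp_const_smul {𝕜 E F : Type*} [NontriviallyNormedField 𝕜]
    [NormedAddCommGroup E] [NormedSpace 𝕜 E] [NormedAddCommGroup F] [NormedSpace 𝕜 F]
    {f : E → F} (hf : ContDiff 𝕜 2 f) (a : 𝕜) (x : E) :
    ‖fderiv 𝕜 (fderiv 𝕜 fun z ↦ f (a • z)) x‖ = ‖a‖ ^ 2 * ‖fderiv 𝕜 (fderiv 𝕜 f) (a • x)‖ := by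
  simp only [← norm_iteratedFDeriv_one (𝕜 := 𝕜), norm_iteratedFDeriv_fderiv]
  rw [iteratedFDeriv_comp_const_smul a hf, norm_smul, norm_pow]

theorem ContDiffBump.exists_bound_norm_fderiv_fderiv {E : Type*} [NormedAddCommGroup E]
    [NormedSpace ℝ E] [FiniteDimensional ℝ E] [HasContDiffBump E] {c : E} (f : ContDiffBump c) :
    ∃ M, ∀ x, ‖fderiv ℝ (fderiv ℝ f) x‖ ≤ M :=
  have hf : ContDiff ℝ 2 f := f.contDiff
  ((hf.fderiv_right (m := 1) (by norm_num)).continuous_fderiv (by norm_num)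
    ).bounded_above_of_compact_support (f.hasCompactSupport.fderiv ℝ |>.fderiv ℝ)

theorem exists_cutoff_norm_fderiv_fderiv_le {E : Type*} [NormedAddCommGroup E] [NormedSpace ℝ E]
    [FiniteDimensional ℝ E] :
    ∃ M > 0, ∀ R > 0, ∃ φ : E → ℝ, ContDiff ℝ 2 φ ∧ (∀ x, φ x ∈ Icc 0 1) ∧
      EqOn φ 1 (ball 0 (R / 2)) ∧ Function.support φ ⊆ ball 0 R ∧
      ∀ x, ‖fderiv ℝ (fderiv ℝ φ) x‖ ≤ M / R ^ 2 := by
  let ψ : ContDiffBump (0 : E) := ⟨1 / 2, 1, by norm_num, by norm_num⟩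
  obtain ⟨M, hM⟩ := ψ.exists_bound_norm_fderiv_fderiv
  refine ⟨max M 1, by positivity, fun R hR ↦ ⟨fun x ↦ ψ (R⁻¹ • x), ?_, ?_, ?_, ?_, ?_⟩⟩
  · exact ψ.contDiff.comp (contDiff_const_smul R⁻¹)
  · exact fun x ↦ ⟨ψ.nonneg, ψ.le_one⟩
  · intro x hx
    apply ψ.one_of_mem_closedBall
    rw [mem_ball_zero_iff] at hx
    rw [mem_closedBall_zero_iff, norm_smul_of_nonneg (by positivity), inv_mul_le_iff₀ hR]
    change ‖x‖ ≤ R * (1 / 2)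
    linarith
  · intro x hx
    have : R⁻¹ • x ∈ Function.support ψ := hx
    rw [ψ.support_eq] at this
    rw [mem_ball_zero_iff, norm_smul_of_nonneg (by positivity), inv_mul_lt_iff₀ hR] at this
    rw [mem_ball_zero_iff]
    simpa [ψ] using this
  · intro x
    rw [norm_fderiv_fderiv_comp_const_smul ψ.contDiff, norm_inv, Real.norm_of_nonneg hR.le,
      inv_pow, inv_mul_eq_div]
    gcongr
    exact (hM _).trans (le_max_left _ _)

section Sandwich

variable {α : Type*} [MeasurableSpace α] {μ : Measure α} {s t : Set α} {f φ : α → ℝ}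

theorem IntegrableOn.mul_of_mem_Icc (hf : IntegrableOn f s μ)
    (hφm : AEStronglyMeasurable φ (μ.restrict s)) (hφ : ∀ x, φ x ∈ Icc 0 1) :
    IntegrableOn (fun x ↦ f x * φ x) s μ :=
  hf.mul_bdd hφm (ae_of_all _ fun x ↦ by rw [Real.norm_of_nonneg (hφ x).1]; exact (hφ x).2)

theorem setIntegral_le_setIntegral_mul_of_eqOn_one (ht : MeasurableSet t) (hts : t ⊆ s)
    (hf0 : ∀ x, 0 ≤ f x) (hφ0 : ∀ x, 0 ≤ φ x) (hφ1 : EqOn φ 1 t)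
    (hfφ : IntegrableOn (fun x ↦ f x * φ x) s μ) :
    ∫ x in t, f x ∂μ ≤ ∫ x in s, f x * φ x ∂μ := by
  calc ∫ x in t, f x ∂μ = ∫ x in t, f x * φ x ∂μ :=
        setIntegral_congr_fun ht fun x hx ↦ by simp [hφ1 hx]
    _ ≤ ∫ x in s, f x * φ x ∂μ :=
        setIntegral_mono_set hfφ (ae_of_all _ fun x ↦ mul_nonneg (hf0 x) (hφ0 x))
          hts.eventuallyLE

theorem setIntegral_mul_le_setIntegral (hf0 : ∀ x, 0 ≤ f x) (hφ1 : ∀ x, φ x ≤ 1)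
    (hf : IntegrableOn f s μ) (hfφ : IntegrableOn (fun x ↦ f x * φ x) s μ) :
    ∫ x in s, f x * φ x ∂μ ≤ ∫ x in s, f x ∂μ :=
  integral_mono hfφ hf fun x ↦ mul_le_of_le_one_right (hf0 x) (hφ1 x)

end Sandwich

theorem norm_setIntegral_ball_mul_le {g S : EuclideanSpace ℝ (Fin 2) → ℝ} {K σ q R : ℝ}
    (hR : 0 < R) (hq : 1 ≤ q) (hσ : 0 ≤ σ) (hg : ∀ x, ‖g x‖ ≤ K / R ^ 2)
    (hS : eLpNorm S (ENNReal.ofReal q) (volume.restrict (ball 0 R)) ≤ ENNReal.ofReal σ) :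
    ‖∫ x in ball (0 : EuclideanSpace ℝ (Fin 2)) R, g x * S x‖ ≤ π * K * σ * R ^ (-(2 / q)) := by
  have : IsFiniteMeasure (volume.restrict (ball (0 : EuclideanSpace ℝ (Fin 2)) R)) :=
    isFiniteMeasure_restrict.2 measure_ball_lt_top.ne
  have hK : 0 ≤ K / R ^ 2 := (norm_nonneg _).trans (hg 0)
  have hgS : eLpNorm (fun x ↦ g x * S x) (ENNReal.ofReal q) (volume.restrict (ball 0 R)) ≤
      ENNReal.ofReal (K / R ^ 2 * σ) := by
    rw [ENNReal.ofReal_mul hK]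
    refine (eLpNorm_le_mul_eLpNorm_of_ae_le_mul (ae_of_all _ fun x ↦ ?_) _).trans (by gcongr)
    rw [norm_mul]
    exact mul_le_mul_of_nonneg_right (hg x) (norm_nonneg _)
  have hvol : (volume.restrict (ball (0 : EuclideanSpace ℝ (Fin 2)) R)).real univ = π * R ^ 2 := by
    simp [measureReal_def, ENNReal.toReal_ofReal hR.le, Real.pi_nonneg, mul_comm]
  refine (norm_integral_le_of_eLpNorm_le (ENNReal.one_le_ofReal.2 hq) (by positivity) hgS).trans ?_
  rw [hvol, ENNReal.toReal_ofReal (by linarith)]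
  have hRpow : (R ^ 2) ^ (1 - 1 / q) = R ^ 2 * R ^ (-(2 / q)) := by
    rw [← Real.rpow_natCast, ← Real.rpow_mul hR.le, ← Real.rpow_add hR]
    congr 1
    push_cast
    ring
  have hpi : π ^ (1 - 1 / q) ≤ π :=
    Real.rpow_le_self_of_one_le (by linarith [Real.pi_gt_three])
      (by linarith [one_div_pos.2 (by linarith : 0 < q)])
  rw [Real.mul_rpow Real.pi_nonneg (by positivity), hRpow]
  calc K / R ^ 2 * σ * (π ^ (1 - 1 / q) * (R ^ 2 * R ^ (-(2 / q))))
      = π ^ (1 - 1 / q) * K * σ * R ^ (-(2 / q)) := by field_simp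
    _ ≤ π * K * σ * R ^ (-(2 / q)) := by
      have : 0 ≤ K := by simpa using (le_div_iff₀ (by positivity : (0 : ℝ) < R ^ 2)).1 hK
      gcongr

theorem stmt9 :
    ∃ C > (0 : ℝ), ∀ (q σ R τ T : ℝ), 1 ≤ q → 0 ≤ σ → 0 < R → 0 ≤ τ → τ < T →
      ∀ e Snorm : ℝ → EuclideanSpace ℝ (Fin 2) → ℝ,
        (∀ t x, 0 ≤ e t x) → (∀ t x, 0 ≤ Snorm t x) →
        (∀ t ∈ Set.Ico τ T, Integrable (e t)
          (volume.restrict (ball (0 : EuclideanSpace ℝ (Fin 2)) R))) →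
        (∀ t ∈ Set.Ico τ T,
          eLpNorm (Snorm t) (ENNReal.ofReal q)
              (volume.restrict (ball (0 : EuclideanSpace ℝ (Fin 2)) R)) ≤
            ENNReal.ofReal σ) →
        (∀ φ : EuclideanSpace ℝ (Fin 2) → ℝ, ContDiff ℝ 2 φ → (∀ x, 0 ≤ φ x) →
          Function.support φ ⊆ ball (0 : EuclideanSpace ℝ (Fin 2)) R →
          ∀ t₁ t₂, τ ≤ t₁ → t₁ ≤ t₂ → t₂ < T →
            (∫ x in ball (0 : EuclideanSpace ℝ (Fin 2)) R, e t₂ x * φ x) -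
                (∫ x in ball (0 : EuclideanSpace ℝ (Fin 2)) R, e t₁ x * φ x) ≤
              ∫ t in t₁..t₂, ∫ x in ball (0 : EuclideanSpace ℝ (Fin 2)) R,
                ‖fderiv ℝ (fderiv ℝ φ) x‖ * Snorm t x) →
        ∀ t₁ t₂, τ ≤ t₁ → t₁ ≤ t₂ → t₂ < T →
          (∫ x in ball (0 : EuclideanSpace ℝ (Fin 2)) (R / 2), e t₂ x) ≤
            (∫ x in ball (0 : EuclideanSpace ℝ (Fin 2)) R, e t₁ x) +
              C * σ * (t₂ - t₁) * R ^ (-(2 / q)) := by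
  obtain ⟨M, hM, hcutoff⟩ := exists_cutoff_norm_fderiv_fderiv_le (E := EuclideanSpace ℝ (Fin 2))
  refine ⟨π * M, by positivity, ?_⟩
  intro q σ R τ T hq hσ hR _ _ e Snorm he0 _ he_int hS henergy t₁ t₂ ht₁ ht₁₂ ht₂
  obtain ⟨φ, hφ_smooth, hφ_mem, hφ_one, hφ_supp, hφ_hess⟩ := hcutoff R hR
  have he_int' : ∀ t ∈ Icc t₁ t₂, IntegrableOn (fun x ↦ e t x * φ x) (ball 0 R) :=
    fun t ht ↦ IntegrableOn.mul_of_mem_Icc (he_int t ⟨ht₁.trans ht.1, ht.2.trans_lt ht₂⟩)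
      hφ_smooth.continuous.aestronglyMeasurable hφ_mem
  have hflux : ∀ t ∈ Ι t₁ t₂, ‖∫ x in ball (0 : EuclideanSpace ℝ (Fin 2)) R,
      ‖fderiv ℝ (fderiv ℝ φ) x‖ * Snorm t x‖ ≤ π * M * σ * R ^ (-(2 / q)) := by
    intro t ht
    rw [uIoc_of_le ht₁₂] at ht
    exact norm_setIntegral_ball_mul_le hR hq hσ
      (fun x ↦ (Real.norm_of_nonneg (by positivity)).trans_le (hφ_hess x)) (hS t ⟨ht₁.trans ht.1.le, ht.2.trans_lt ht₂⟩)
  have htime := intervalIntegral.norm_integral_le_of_norm_le_const hflux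
  calc ∫ x in ball (0 : EuclideanSpace ℝ (Fin 2)) (R / 2), e t₂ x
      ≤ ∫ x in ball (0 : EuclideanSpace ℝ (Fin 2)) R, e t₂ x * φ x :=
        setIntegral_le_setIntegral_mul_of_eqOn_one measurableSet_ball
          (ball_subset_ball (by linarith)) (he0 t₂) (fun x ↦ (hφ_mem x).1) hφ_one
          (he_int' t₂ ⟨ht₁₂, le_rfl⟩)
    _ ≤ (∫ x in ball (0 : EuclideanSpace ℝ (Fin 2)) R, e t₁ x * φ x) +
          π * M * σ * R ^ (-(2 / q)) * |t₂ - t₁| := by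
        linarith [henergy φ hφ_smooth (fun x ↦ (hφ_mem x).1) hφ_supp t₁ t₂ ht₁ ht₁₂ ht₂,
          le_norm_self (∫ t in t₁..t₂, ∫ x in ball (0 : EuclideanSpace ℝ (Fin 2)) R,
            ‖fderiv ℝ (fderiv ℝ φ) x‖ * Snorm t x)]
    _ ≤ (∫ x in ball (0 : EuclideanSpace ℝ (Fin 2)) R, e t₁ x) +
          π * M * σ * (t₂ - t₁) * R ^ (-(2 / q)) := by
        rw [abs_of_nonneg (sub_nonneg.2 ht₁₂)]
        linarith [setIntegral_mul_le_setIntegral (he0 t₁) (fun x ↦ (hφ_mem x).2)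
          (he_int t₁ ⟨ht₁, ht₁₂.trans_lt ht₂⟩) (he_int' t₁ ⟨le_rfl, ht₁₂⟩)]
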